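/- arXiv:quant-ph/0406227 — 2 statements merged into one kernel-verified Lean document; each statement's English description precedes it below -/
import Mathlib

section
/- (Theorem, part 1: unitary dynamics has zero chaos degree.) Let d ≥ 1, let ρ be a d×d complex density matrix (positive semidefinite with trace 1), let X be a d×d Hermitian matrix, and let U be a d×d unitary matrix. Define the one-step maps Θ_k*σ = UσU* for all k, and the sequence x_k = tr(X Θ_k*ρ) = tr(X U ρ U*). Then x_k is independent of k, and consequently for every n, m ∈ ℕ and every finite family of pairwise disjoint subsets of ℝ covering the values x_k, the entropic chaos degree D = Σ_{i,j} p_{ij}^{(n,n+1)} log(p_i^{(n)}/p_{ij}^{(n,n+1)}) of the sequence (x_k) equals 0; hence D(ρ; Λ_n*) = 0 for the dynamics Λ_n*ρ = UⁿρU*ⁿ. -/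
open Finset Matrix
open scoped ComplexOrder

/-- Empirical probability distribution at time `n` with window length `m+1`. -/
noncomputable def empProb (x : ℕ → ℝ) (m n : ℕ) {M : ℕ} (B : Fin M → Set ℝ) (i : Fin M) : ℝ :=
  (1 / (m + 1 : ℝ)) * ∑ k ∈ Finset.range (m + 1), (B i).indicator (fun _ => (1 : ℝ)) (x (n + k))

/-- Empirical joint probability distribution between times `n` and `n+1`. -/
noncomputable def empJoint (x : ℕ → ℝ) (m n : ℕ) {M : ℕ} (B : Fin M → Set ℝ)
    (i j : Fin M) : ℝ :=
  (1 / (m + 1 : ℝ)) * ∑ k ∈ Finset.range (m + 1),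
    (B i).indicator (fun _ => (1 : ℝ)) (x (n + k)) *
      (B j).indicator (fun _ => (1 : ℝ)) (x (n + k + 1))

/-- Entropic chaos degree of the sequence `x` with respect to the partition `B`. -/
noncomputable def ecd (x : ℕ → ℝ) (m n : ℕ) {M : ℕ} (B : Fin M → Set ℝ) : ℝ :=
  ∑ i, ∑ j, empJoint x m n B i j * Real.log (empProb x m n B i / empJoint x m n B i j)

/-! Since `Θ k` does not depend on `k`, the trajectory is constant. For a constant sequence
every window sees a single value, so `p_ij = p_i p_j` with `p_i, p_j ∈ {0, 1}`: each term of
the chaos degree is either `0 · log _` or `1 · log 1`. -/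

section ConstantSequence

variable (c : ℝ) (m n : ℕ) {M : ℕ} (B : Fin M → Set ℝ)

theorem one_div_mul_sum_range_const (a : ℝ) :
    (1 / (m + 1 : ℝ)) * ∑ _k ∈ Finset.range (m + 1), a = a := by
  rw [Finset.sum_const, Finset.card_range, nsmul_eq_mul]
  push_cast
  field_simp

theorem empProb_const (i : Fin M) :
    empProb (fun _ => c) m n B i = (B i).indicator (fun _ => (1 : ℝ)) c :=
  one_div_mul_sum_range_const m _

theorem empJoint_const (i j : Fin M) :
    empJoint (fun _ => c) m n B i j =
      (B i).indicator (fun _ => (1 : ℝ)) c * (B j).indicator (fun _ => (1 : ℝ)) c :=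
  one_div_mul_sum_range_const m _

theorem mul_mul_log_div_mul_eq_zero_of_mem_zero_one {a b : ℝ}
    (ha : a = 0 ∨ a = 1) (hb : b = 0 ∨ b = 1) :
    a * b * Real.log (a / (a * b)) = 0 := by
  rcases ha with rfl | rfl <;> rcases hb with rfl | rfl <;> simp

theorem ecd_const : ecd (fun _ => c) m n B = 0 := by
  unfold ecd
  refine Finset.sum_eq_zero fun i _ => Finset.sum_eq_zero fun j _ => ?_
  rw [empProb_const, empJoint_const]
  exact mul_mul_log_div_mul_eq_zero_of_mem_zero_one
    (Set.indicator_eq_zero_or_self _ _ _) (Set.indicator_eq_zero_or_self _ _ _)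

end ConstantSequence

theorem ecd_unitary_eq_zero_general {d : ℕ}
    (ρ X U : Matrix (Fin d) (Fin d) ℂ)
    (Θ : ℕ → Matrix (Fin d) (Fin d) ℂ → Matrix (Fin d) (Fin d) ℂ)
    (hΘ : ∀ k τ, Θ k τ = U * τ * Uᴴ)
    (x : ℕ → ℝ) (hx : ∀ k, x k = ((X * Θ k ρ).trace).re) :
    (∀ k l, x k = x l) ∧
      ∀ (n m : ℕ) {M : ℕ} (B : Fin M → Set ℝ),
        (Pairwise fun i j => Disjoint (B i) (B j)) →
        (∀ k, ∃ i, x k ∈ B i) →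
        ecd x m n B = 0 := by
  have hconst : ∀ k l, x k = x l := fun k l => by rw [hx, hx, hΘ, hΘ]
  refine ⟨hconst, fun n m M B _ _ => ?_⟩
  have hx_eq : x = fun _ => x 0 := funext fun k => hconst k 0
  rw [hx_eq]
  exact ecd_const (x 0) m n B

/-- Part (1) of the theorem: unitary dynamics has zero entropic chaos degree.
The one-step maps are `Θ k τ = U τ Uᴴ`, the observable trajectory
`x k = Re tr (X · Θ k ρ)` is independent of `k`, and hence the entropic chaos degree
of the sequence `(x k)` vanishes for every partition; in particular
`D(ρ; Λ_n*) = 0` for the dynamics `Λ_n* ρ = Uⁿ ρ (Uᴴ)ⁿ`. -/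
theorem ecd_unitary_eq_zero {d : ℕ} (hd : 1 ≤ d)
    (ρ X U : Matrix (Fin d) (Fin d) ℂ)
    (hρ : ρ.PosSemidef) (hρtr : ρ.trace = 1) (hX : X.IsHermitian)
    (hU : U ∈ Matrix.unitaryGroup (Fin d) ℂ)
    (Θ : ℕ → Matrix (Fin d) (Fin d) ℂ → Matrix (Fin d) (Fin d) ℂ)
    (hΘ : ∀ k τ, Θ k τ = U * τ * Uᴴ)
    (x : ℕ → ℝ) (hx : ∀ k, x k = ((X * Θ k ρ).trace).re) :
    (∀ k l, x k = x l) ∧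
      ∀ (n m : ℕ) {M : ℕ} (B : Fin M → Set ℝ),
        (Pairwise fun i j => Disjoint (B i) (B j)) →
        (∀ k, ∃ i, x k ∈ B i) →
        ecd x m n B = 0 :=
  ecd_unitary_eq_zero_general ρ X U Θ hΘ x hx
end

section
/- Let θ ∈ ℝ and let (e_n)_{n≥0} be a real sequence satisfying the recursion e_{n+1} = cos θ + (1 − cos θ) e_n². Define z_n = (1/2)(1 − e_n) and b = sin²(θ/2). Then z_{n+1} = 4 b z_n (1 − z_n) for all n; that is, the third Bloch-vector component of the spin-1/2 dynamics of Example 1 obeys the logistic map with parameter 4b. -/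
/-!
Since `1 - cos θ = 2b`, the recursion reads `1 - e' = 2b (1 - e²)`, and `1 - e² = 4 z (1 - z)`.
-/

theorem Real.cos_eq_one_sub_two_mul_sin_half_sq (θ : ℝ) :
    Real.cos θ = 1 - 2 * Real.sin (θ / 2) ^ 2 := by
  rw [Real.sin_sq_eq_half_sub, mul_div_cancel₀ θ two_ne_zero]
  ring

theorem half_one_sub_quadratic_eq_logistic {K : Type*} [Field K] (h2 : (2 : K) ≠ 0) (b e : K) :
    (1 - ((1 - 2 * b) + (1 - (1 - 2 * b)) * e ^ 2)) / 2
      = 4 * b * ((1 - e) / 2) * (1 - (1 - e) / 2) := by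
  field_simp
  ring

/-- The third Bloch-vector component recursion `e_{n+1} = cos θ + (1 − cos θ) e_n²` of the
spin-1/2 dynamics reduces, via `z_n = (1 − e_n)/2` and `b = sin²(θ/2)`, to the logistic map
`z_{n+1} = 4 b z_n (1 − z_n)`. -/
theorem bloch_component_logistic (θ : ℝ) (e : ℕ → ℝ)
    (he : ∀ n, e (n + 1) = Real.cos θ + (1 - Real.cos θ) * (e n) ^ 2)
    (z : ℕ → ℝ) (hz : ∀ n, z n = (1 - e n) / 2)
    (b : ℝ) (hb : b = Real.sin (θ / 2) ^ 2) :
    ∀ n, z (n + 1) = 4 * b * z n * (1 - z n) := by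
  intro n
  rw [hz, hz, he, Real.cos_eq_one_sub_two_mul_sin_half_sq, ← hb]
  exact half_one_sub_quadratic_eq_logistic two_ne_zero b (e n)
end
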